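/- arXiv:2508.00276 — 3 statements merged into one kernel-verified Lean document; each statement's English description precedes it below -/
import Mathlib

section
/- Let k ≥ 5 be an integer, K := k - 3, and let φ be an E3-CNF formula with m clauses C_1, …, C_m over variables x_1, …, x_n. Let y_1, …, y_K be fresh variables, let H_i (for i ∈ [K]) be the Horn clause over y_1,…,y_K whose only positive literal is y_i, let ψ be the Ek-CNF formula consisting of the K·m clauses C_j ∨ H_i (j ∈ [m], i ∈ [K]), and let α_start and α_end be the all-ones and all-zeros assignments over the n+K variables, respectively. For any real δ > 0, if val_φ(α) < 1 - δ for every assignment α of φ, then opt_ψ(α_start ↔ α_end) < 1 - δ/(k-3). -/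
/-- An assignment maps each Boolean variable to a truth value. -/
abbrev Assignment (V : Type) := V → Bool

/-- A literal is a variable together with a polarity (`true` = positive);
a clause is a disjunction of literals, represented as the list of its literals
(its width is the length of this list). -/
abbrev Clause (V : Type) := List (V × Bool)

/-- A CNF formula is a conjunction of clauses, represented as a list
(clauses are counted with multiplicity). -/
abbrev CNF (V : Type) := List (Clause V)

/-- An assignment satisfies a clause if it makes at least one literal true. -/
def satClause {V : Type} (α : Assignment V) (C : Clause V) : Bool :=
  C.any fun l => α l.1 == l.2

/-- An assignment satisfies a CNF formula if it satisfies every clause. -/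
def satCNF {V : Type} (α : Assignment V) (φ : CNF V) : Bool :=
  φ.all fun C => satClause α C

/-- The fraction of clauses of `φ` satisfied by `α`. -/
noncomputable def val {V : Type} (φ : CNF V) (α : Assignment V) : ℝ :=
  ((φ.filter fun C => satClause α C).length : ℝ) / (φ.length : ℝ)

/-- The number of clauses of `φ` violated by `α`. -/
def numViol {V : Type} (φ : CNF V) (α : Assignment V) : ℕ :=
  (φ.filter fun C => !satClause α C).length

/-- Two assignments differ on at most one variable. -/
def Adjacent {V : Type} (α β : Assignment V) : Prop :=
  ∀ v w, α v ≠ β v → α w ≠ β w → v = w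

/-- `seq` is a reconfiguration sequence from `s` to `e`: a nonempty finite sequence of
assignments starting at `s`, ending at `e`, in which consecutive assignments differ
on at most one variable. -/
def IsReconfSeq {V : Type} (s e : Assignment V) (seq : List (Assignment V)) : Prop :=
  seq ≠ [] ∧ seq.head? = some s ∧ seq.getLast? = some e ∧ seq.Chain' Adjacent

/-- The value of a reconfiguration sequence: the minimum of `val φ` over its members. -/
noncomputable def seqVal {V : Type} (φ : CNF V) (seq : List (Assignment V)) : ℝ :=
  sInf (val φ '' {α | α ∈ seq})

/-- `opt_φ(s ↔ e)`: the optimal (maximum) value over all reconfiguration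
sequences from `s` to `e`. -/
noncomputable def optVal {V : Type} (φ : CNF V) (s e : Assignment V) : ℝ :=
  sSup (seqVal φ '' {seq | IsReconfSeq s e seq})

lemma val_nonneg' {V : Type} (φ : CNF V) (α : Assignment V) : 0 ≤ val φ α := by
  unfold val; positivity

lemma numViol_le {V : Type} (φ : CNF V) (α : Assignment V) : numViol φ α ≤ φ.length :=
  List.length_filter_le _ _

lemma sat_add_viol {V : Type} (φ : CNF V) (α : Assignment V) :
    (φ.filter fun C => satClause α C).length + numViol φ α = φ.length :=
  (List.length_eq_length_filter_add (fun C => satClause α C)).symm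

lemma val_eq_one_sub {V : Type} (φ : CNF V) (α : Assignment V) (h : φ.length ≠ 0) :
    val φ α = 1 - (numViol φ α : ℝ) / (φ.length : ℝ) := by
  have hl : (0:ℝ) < (φ.length : ℝ) := by exact_mod_cast Nat.pos_of_ne_zero h
  have key := sat_add_viol φ α
  unfold val
  have h2 : ((φ.filter fun C => satClause α C).length : ℝ) = (φ.length : ℝ) - numViol φ α := by
    have : ((φ.filter fun C => satClause α C).length : ℝ) + numViol φ α = φ.length := by
      exact_mod_cast congrArg (Nat.cast : ℕ → ℝ) key
    linarith
  rw [h2, sub_div, div_self hl.ne']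

lemma crossing {A : Type} (f : A → ℕ) :
    ∀ l : List A, l.Chain' (fun a b => f b ≤ f a + 1) →
      (∀ a ∈ l.head?, f a ≤ 1) → ∀ b ∈ l, 1 ≤ f b → ∃ c ∈ l, f c = 1
  | [], _, _, b, hb, _ => absurd hb List.not_mem_nil
  | x :: l, hch, hhd, b, hb, hfb => by
    have hx : f x ≤ 1 := hhd x rfl
    rcases Nat.lt_or_ge (f x) 1 with h0 | h1
    · rcases List.mem_cons.1 hb with rfl | hb'
      · omega
      · obtain ⟨hrel, htl⟩ := List.isChain_cons.1 hch
        obtain ⟨c, hc, hc1⟩ := crossing f l htl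
          (fun a ha => by have := hrel a ha; omega) b hb' hfb
        exact ⟨c, List.mem_cons_of_mem _ hc, hc1⟩
    · exact ⟨x, List.mem_cons_self, le_antisymm hx h1⟩

lemma adj_cnt {n K : ℕ} {α β : Assignment (Fin n ⊕ Fin K)} (h : Adjacent α β) :
    (Finset.univ.filter fun j : Fin K => β (Sum.inr j) = false).card ≤
    (Finset.univ.filter fun j : Fin K => α (Sum.inr j) = false).card + 1 := by
  by_cases hag : ∀ j : Fin K, α (Sum.inr j) = β (Sum.inr j)
  · have heq : (Finset.univ.filter fun j : Fin K => β (Sum.inr j) = false)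
        = (Finset.univ.filter fun j : Fin K => α (Sum.inr j) = false) := by
      apply Finset.filter_congr; intro j _; rw [hag j]
    rw [heq]; omega
  · push_neg at hag; obtain ⟨j0, hj0⟩ := hag
    have hsub : (Finset.univ.filter fun j : Fin K => β (Sum.inr j) = false)
        ⊆ insert j0 (Finset.univ.filter fun j : Fin K => α (Sum.inr j) = false) := by
      intro j hj
      simp only [Finset.mem_filter, Finset.mem_univ, true_and] at hj
      simp only [Finset.mem_insert, Finset.mem_filter, Finset.mem_univ, true_and]
      by_cases hj' : j = j0
      · exact Or.inl hj'
      · right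
        have heq : α (Sum.inr j) = β (Sum.inr j) := by
          by_contra hne
          exact hj' (Sum.inr.inj (h _ _ hne hj0))
        rw [heq]; exact hj
    calc (Finset.univ.filter fun j : Fin K => β (Sum.inr j) = false).card
        ≤ (insert j0 (Finset.univ.filter fun j : Fin K => α (Sum.inr j) = false)).card :=
          Finset.card_le_card hsub
      _ ≤ _ := Finset.card_insert_le _ _

lemma satClause_map {n K : ℕ} (β : Assignment (Fin n ⊕ Fin K)) (C : Clause (Fin n)) :
    satClause β (C.map fun l => (Sum.inl l.1, l.2)) = satClause (fun v => β (Sum.inl v)) C := by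
  unfold satClause
  induction C with
  | nil => rfl
  | cons x C ih => simp_all

lemma satClause_horn {n K : ℕ} (β : Assignment (Fin n ⊕ Fin K)) (i₀ i : Fin K)
    (h0 : β (Sum.inr i₀) = false) (h1 : ∀ j, j ≠ i₀ → β (Sum.inr j) = true) :
    satClause β (List.ofFn fun t => ((Sum.inr t : Fin n ⊕ Fin K), t == i)) = !(i == i₀) := by
  unfold satClause
  by_cases hi : i = i₀
  · subst hi
    simp only [beq_self_eq_true, Bool.not_true]
    rw [List.any_eq_false]
    intro x hx
    obtain ⟨t, rfl⟩ := List.mem_ofFn.1 hx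
    by_cases ht : t = i
    · subst ht; simp [h0]
    · simp [h1 t (by simpa using ht), ht]
  · have h2 : (i == i₀) = false := by simp [hi]
    rw [h2, Bool.not_false, List.any_eq_true]
    refine ⟨(Sum.inr i₀, i₀ == i), ?_, ?_⟩
    · rw [List.mem_ofFn]; exact ⟨i₀, rfl⟩
    · simp [h0, Ne.symm hi]

lemma numViol_psi {n K : ℕ} (φ : CNF (Fin n)) (β : Assignment (Fin n ⊕ Fin K))
    (i₀ : Fin K) (h0 : β (Sum.inr i₀) = false) (h1 : ∀ j, j ≠ i₀ → β (Sum.inr j) = true) :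
    numViol (φ.flatMap fun C =>
        (List.finRange K).map fun i =>
          C.map (fun l => (Sum.inl l.1, l.2)) ++ List.ofFn fun t => (Sum.inr t, t == i)) β
      = numViol φ (fun v => β (Sum.inl v)) := by
  have hD : ∀ (C : Clause (Fin n)) (i : Fin K),
      (!satClause β (C.map (fun l => (Sum.inl l.1, l.2))
          ++ List.ofFn fun t => ((Sum.inr t : Fin n ⊕ Fin K), t == i)))
        = ((i == i₀) && !satClause (fun v => β (Sum.inl v)) C) := by
    intro C i
    have happ : satClause β (C.map (fun l => (Sum.inl l.1, l.2))
          ++ List.ofFn fun t => ((Sum.inr t : Fin n ⊕ Fin K), t == i))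
        = (satClause β (C.map fun l => (Sum.inl l.1, l.2))
          || satClause β (List.ofFn fun t => ((Sum.inr t : Fin n ⊕ Fin K), t == i))) := by
      unfold satClause; rw [List.any_append]
    rw [happ, satClause_map, satClause_horn β i₀ i h0 h1]
    cases hbe : (i == i₀) <;> cases hs : satClause (fun v => β (Sum.inl v)) C <;> simp
  have hinner : ∀ C : Clause (Fin n),
      ((List.finRange K).countP fun i =>
        !satClause β (C.map (fun l => (Sum.inl l.1, l.2))
          ++ List.ofFn fun t => ((Sum.inr t : Fin n ⊕ Fin K), t == i)))
      = (if satClause (fun v => β (Sum.inl v)) C then 0 else 1) := by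
    intro C
    rw [List.countP_congr (fun i _ => by rw [hD C i])]
    cases hs : satClause (fun v => β (Sum.inl v)) C
    · simp only [Bool.not_false, Bool.and_true, if_neg Bool.false_ne_true]
      have hcc : ((List.finRange K).countP fun i => i == i₀) = (List.finRange K).count i₀ := rfl
      rw [hcc, List.count_eq_one_of_mem (List.nodup_finRange K) (List.mem_finRange i₀)]
    · simp
  unfold numViol
  rw [← List.countP_eq_length_filter, ← List.countP_eq_length_filter]
  induction φ with
  | nil => rfl
  | cons C φ ih =>
    rw [List.flatMap_cons, List.countP_append, List.countP_cons, ih, List.countP_map]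
    have h2 := hinner C
    simp only [Function.comp_def] at h2 ⊢
    rw [h2]
    cases hs : satClause (fun v => β (Sum.inl v)) C <;> simp [hs] <;> omega

lemma psi_len {n K : ℕ} (φ : CNF (Fin n)) :
    (φ.flatMap fun C =>
        (List.finRange K).map fun i =>
          C.map (fun l => ((Sum.inl l.1 : Fin n ⊕ Fin K), l.2))
            ++ List.ofFn fun t => (Sum.inr t, t == i)).length = φ.length * K := by
  induction φ with
  | nil => simp
  | cons C φ ih => simp [List.flatMap_cons, ih]; ring

/-- Soundness of the Horn-clause reduction (`k ≥ 5`, `K := k - 3`): with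
`ψ`, `αs`, `αe` as in the reduction, for any real `δ > 0`, if `val_φ(α) < 1 - δ` for every
assignment `α` of `φ`, then `opt_ψ(αs ↔ αe) < 1 - δ/(k-3)`. -/
theorem stmt12 {n k : ℕ} (hk : 5 ≤ k) (φ : CNF (Fin n))
    (h3 : ∀ C ∈ φ, C.length = 3)
    (ψ : CNF (Fin n ⊕ Fin (k - 3)))
    (hψ : ψ = φ.flatMap fun C =>
        (List.finRange (k - 3)).map fun i =>
          C.map (fun l => (Sum.inl l.1, l.2)) ++ List.ofFn fun t => (Sum.inr t, t == i))
    (αs αe : Assignment (Fin n ⊕ Fin (k - 3)))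
    (hαs : αs = fun _ => true) (hαe : αe = fun _ => false)
    (δ : ℝ) (hδ : 0 < δ)
    (hval : ∀ α : Assignment (Fin n), val φ α < 1 - δ) :
    optVal ψ αs αe < 1 - δ / ((k : ℝ) - 3) := by
  subst hψ hαs hαe
  set K := k - 3 with hKdef
  have hK2 : 2 ≤ K := by omega
  have hKcast : ((k:ℝ) - 3 : ℝ) = (K : ℝ) := by
    rw [hKdef]; push_cast [Nat.cast_sub (by omega : 3 ≤ k)]; ring
  rw [hKcast]
  have hKpos : (0:ℝ) < (K:ℝ) := by exact_mod_cast Nat.pos_of_ne_zero (by omega)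
  have hK2' : (2:ℝ) ≤ (K:ℝ) := by exact_mod_cast hK2
  have hδ1 : δ < 1 := by
    have h := hval (fun _ => true)
    have := val_nonneg' φ (fun _ => true); linarith
  by_cases hm : φ.length = 0
  · -- empty formula
    have hφ : φ = [] := List.length_eq_zero_iff.mp hm
    subst hφ
    have hlt : (0:ℝ) < 1 - δ / (K:ℝ) := by
      have : δ / (K:ℝ) < 1 := by
        rw [div_lt_one hKpos]; linarith
      linarith
    refine lt_of_le_of_lt (Real.sSup_le ?_ le_rfl) hlt
    rintro x ⟨seq, hseq, rfl⟩
    obtain ⟨hne, hhd, hlast, hch⟩ := hseq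
    obtain ⟨a, ha⟩ := List.exists_mem_of_ne_nil seq hne
    have hmem : val ([].flatMap fun C =>
        (List.finRange K).map fun i =>
          (C : Clause (Fin n)).map (fun l => ((Sum.inl l.1 : Fin n ⊕ Fin K), l.2))
            ++ List.ofFn fun t => (Sum.inr t, t == i)) a ∈
        (val _ '' {α | α ∈ seq}) := ⟨a, ha, rfl⟩
    refine le_trans (csInf_le ⟨0, ?_⟩ hmem) ?_
    · rintro y ⟨b, _, rfl⟩; exact val_nonneg' _ _
    · simp [val]
  · -- main case
    have hmpos : (0:ℝ) < (φ.length : ℝ) := by exact_mod_cast Nat.pos_of_ne_zero hm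
    set m := φ.length with hmdef
    set v0 : ℕ := Nat.floor (δ * m) + 1 with hv0def
    have hv0gt : δ * m < (v0:ℝ) := by
      rw [hv0def]; push_cast; exact Nat.lt_floor_add_one _
    have hviol : ∀ γ : Assignment (Fin n), v0 ≤ numViol φ γ := by
      intro γ
      have h1 := hval γ
      rw [val_eq_one_sub φ γ hm] at h1
      have h2 : δ * m < (numViol φ γ : ℝ) := by
        have h3' : δ < (numViol φ γ : ℝ) / m := by linarith
        calc δ * m < ((numViol φ γ : ℝ) / m) * m := by
              exact mul_lt_mul_of_pos_right h3' hmpos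
          _ = (numViol φ γ : ℝ) := by field_simp
      have hfl : ((Nat.floor (δ * m) : ℝ)) ≤ δ * m :=
        Nat.floor_le (by positivity)
      have : ((Nat.floor (δ * m) : ℕ) : ℝ) < (numViol φ γ : ℝ) := lt_of_le_of_lt hfl h2
      have : Nat.floor (δ * m) < numViol φ γ := by exact_mod_cast this
      omega
    have hv0m : v0 ≤ m := le_trans (hviol fun _ => true) (numViol_le φ _)
    have hKmpos : (0:ℝ) < (K:ℝ) * m := by positivity
    set B : ℝ := 1 - (v0 : ℝ) / ((K:ℝ) * m) with hBdef
    have hBlt : B < 1 - δ / (K:ℝ) := by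
      have hd : δ / (K:ℝ) < (v0:ℝ) / ((K:ℝ) * m) := by
        rw [div_lt_div_iff₀ hKpos hKmpos]
        nlinarith
      rw [hBdef]; linarith
    have hB0 : 0 ≤ B := by
      have : (v0:ℝ) / ((K:ℝ) * m) ≤ 1 := by
        rw [div_le_one hKmpos]
        have : (v0:ℝ) ≤ (m:ℝ) := by exact_mod_cast hv0m
        nlinarith
      rw [hBdef]; linarith
    refine lt_of_le_of_lt (Real.sSup_le ?_ hB0) hBlt
    rintro x ⟨seq, hseq, rfl⟩
    obtain ⟨hne, hhd, hlast, hch⟩ := hseq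
    set f : Assignment (Fin n ⊕ Fin K) → ℕ :=
      fun γ => (Finset.univ.filter fun j : Fin K => γ (Sum.inr j) = false).card with hfdef
    have hch' : seq.Chain' fun a b => f b ≤ f a + 1 := List.IsChain.imp (fun a b hab => adj_cnt hab) hch
    have hhd' : ∀ a ∈ seq.head?, f a ≤ 1 := by
      intro a ha
      rw [hhd, Option.mem_some_iff] at ha
      subst ha
      simp [hfdef]
    have hendmem : (fun _ => false) ∈ seq :=
      List.mem_of_getLast? hlast
    have hfend : f (fun _ => false) = K := by simp [hfdef]
    obtain ⟨β, hβmem, hβ1⟩ := crossing f seq hch' hhd' _ hendmem (by omega)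
    obtain ⟨j0, hj0⟩ := Finset.card_eq_one.mp hβ1
    have h0 : β (Sum.inr j0) = false := by
      have : j0 ∈ (Finset.univ.filter fun j : Fin K => β (Sum.inr j) = false) := by
        rw [hj0]; exact Finset.mem_singleton_self j0
      simpa using this
    have h1 : ∀ j, j ≠ j0 → β (Sum.inr j) = true := by
      intro j hj
      by_contra hne
      have hjf : β (Sum.inr j) = false := by
        cases hb : β (Sum.inr j)
        · rfl
        · exact absurd hb hne
      have : j ∈ (Finset.univ.filter fun j : Fin K => β (Sum.inr j) = false) := by
        simp [hjf]
      rw [hj0, Finset.mem_singleton] at this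
      exact hj this
    -- seqVal bound
    have hlen : (φ.flatMap fun C =>
        (List.finRange K).map fun i =>
          C.map (fun l => ((Sum.inl l.1 : Fin n ⊕ Fin K), l.2))
            ++ List.ofFn fun t => (Sum.inr t, t == i)).length = m * K := psi_len φ
    have hlenne : (φ.flatMap fun C =>
        (List.finRange K).map fun i =>
          C.map (fun l => ((Sum.inl l.1 : Fin n ⊕ Fin K), l.2))
            ++ List.ofFn fun t => (Sum.inr t, t == i)).length ≠ 0 := by
      rw [hlen]; positivity
    have hvalβ : val (φ.flatMap fun C =>
        (List.finRange K).map fun i =>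
          C.map (fun l => ((Sum.inl l.1 : Fin n ⊕ Fin K), l.2))
            ++ List.ofFn fun t => (Sum.inr t, t == i)) β ≤ B := by
      rw [val_eq_one_sub _ _ hlenne, hlen, numViol_psi φ β j0 h0 h1, hBdef]
      have hge : (v0 : ℝ) ≤ (numViol φ (fun v => β (Sum.inl v)) : ℝ) := by
        exact_mod_cast hviol _
      have hmk : ((m * K : ℕ) : ℝ) = (K:ℝ) * m := by push_cast; ring
      rw [hmk]
      have hdiv : (v0:ℝ) / ((K:ℝ) * m) ≤ (numViol φ (fun v => β (Sum.inl v)) : ℝ) / ((K:ℝ) * m) := by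
        gcongr
      linarith
    refine le_trans (csInf_le ⟨0, ?_⟩ ⟨β, hβmem, rfl⟩) hvalβ
    rintro y ⟨b, _, rfl⟩; exact val_nonneg' _ _
end

section
/- Let φ be an E3-CNF formula with m clauses C_1, …, C_m over variables x_1, …, x_n, let y, z_1, z_2 be fresh variables, and let m_1, m_2 ≥ 1 be integers. Let ψ consist of the clauses C_j ∨ y for every j ∈ [m], together with m_1 copies of ¬y ∨ z_1 ∨ ¬z_2 and m_2 copies of ¬y ∨ ¬z_1 ∨ z_2. Let α_start assign 1 to all of x_1,…,x_n and (y,z_1,z_2) = (1,1,1), and let α_end assign 0 to all of x_1,…,x_n and (y,z_1,z_2) = (1,0,0). Suppose δ > 0 is such that every assignment for φ violates at least δ·m clauses of φ. Then every reconfiguration sequence from α_start to α_end contains an assignment that violates at least min{δ·m, m_1, m_2} clauses of ψ; in particular, if m_1 = m_2 = δ·m (with δ·m an integer), then opt_ψ(α_start ↔ α_end) ≤ 1 - δ/(1 + 2δ). -/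
/-!
A reconfiguration sequence has to move `z₁` from `1` to `0`, and a single flip cannot change `z₁`
while keeping `z₁ = z₂`, so some assignment of the sequence has `z₁ ≠ z₂`. There, either `y = 0`
and the clauses `C_j ∨ y` violate as many clauses as `φ` does, or `y = 1` and one of the two
blocks of copies is entirely violated. With `m₁ = m₂ = δm`, `ψ` has `m(1 + 2δ)` clauses, whence
the value bound.
-/

variable {V : Type}

section Reconfiguration

theorem Adjacent.apply_eq_of_apply_eq {α β : Assignment V} (h : Adjacent α β) {v w : V}
    (hvw : v ≠ w) (hα : α v = α w) (hβ : β v = β w) : α v = β v := by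
  by_contra hne
  exact hvw (h v w hne (by rwa [← hα, ← hβ]))

theorem IsReconfSeq.exists_mem_apply_ne {s e : Assignment V} {seq : List (Assignment V)}
    (h : IsReconfSeq s e seq) {v w : V} (hvw : v ≠ w) (hse : s v ≠ e v) :
    ∃ β ∈ seq, β v ≠ β w := by
  obtain ⟨-, hhead, hlast, hchain⟩ := h
  by_contra! hall
  have hchain_v : seq.IsChain fun α β => α v = β v :=
    List.IsChain.imp_of_mem_imp
      (fun α β hα hβ hαβ => hαβ.apply_eq_of_apply_eq hvw (hall α hα) (hall β hβ)) hchain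
  have hconst : ∀ β ∈ seq, s v = β v :=
    hchain_v.induction (fun β => s v = β v) seq (fun _ _ hαβ hα => hα.trans hαβ)
      (fun hne => by rw [(List.head_eq_iff_head?_eq_some hne).mpr hhead])
  exact hse (hconst e (List.mem_of_getLast? hlast))

end Reconfiguration

section Value

theorem numViol_append (φ ψ : CNF V) (α : Assignment V) :
    numViol (φ ++ ψ) α = numViol φ α + numViol ψ α := by
  simp [numViol]

theorem numViol_replicate_of_satClause_eq_false {C : Clause V} {α : Assignment V}
    (hC : satClause α C = false) (k : ℕ) : numViol (List.replicate k C) α = k := by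
  simp [numViol, hC]

theorem val_le_one_sub_div {φ : CNF V} {α : Assignment V} {k : ℝ}
    (hk : k ≤ numViol φ α) : val φ α ≤ 1 - k / φ.length := by
  rcases Nat.eq_zero_or_pos φ.length with hzero | hpos
  · simp [val, hzero]
  · have hlen : (φ.length : ℝ) = (φ.filter fun C => satClause α C).length + numViol φ α := by
      exact_mod_cast List.length_eq_length_filter_add (l := φ) fun C => satClause α C
    rw [val, le_sub_iff_add_le, ← add_div, div_le_one (by exact_mod_cast hpos)]
    linarith

theorem seqVal_le_val (φ : CNF V) {seq : List (Assignment V)} {β : Assignment V}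
    (hβ : β ∈ seq) : seqVal φ seq ≤ val φ β :=
  csInf_le ⟨0, by rintro _ ⟨γ, -, rfl⟩; unfold val; positivity⟩ ⟨β, hβ, rfl⟩

theorem optVal_le {φ : CNF V} {s e : Assignment V} {c : ℝ} (hc : 0 ≤ c)
    (h : ∀ seq, IsReconfSeq s e seq → ∃ β ∈ seq, val φ β ≤ c) : optVal φ s e ≤ c := by
  refine Real.sSup_le ?_ hc
  rintro _ ⟨seq, hseq, rfl⟩
  obtain ⟨β, hβ, hval⟩ := h seq hseq
  exact (seqVal_le_val φ hβ).trans hval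

end Value

section Reduction

/-- `Sum.inr 0`, `Sum.inr 1`, `Sum.inr 2` are the fresh variables `y`, `z₁`, `z₂`. -/
def liftClause (C : Clause V) : Clause (V ⊕ Fin 3) :=
  C.map (fun l => (Sum.inl l.1, l.2)) ++ [(Sum.inr 0, true)]

def reduction (φ : CNF V) (m₁ m₂ : ℕ) : CNF (V ⊕ Fin 3) :=
  (φ.map liftClause ++ List.replicate m₁ [(Sum.inr 0, false), (Sum.inr 1, true), (Sum.inr 2, false)])
    ++ List.replicate m₂ [(Sum.inr 0, false), (Sum.inr 1, false), (Sum.inr 2, true)]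

theorem length_reduction (φ : CNF V) (m₁ m₂ : ℕ) :
    (reduction φ m₁ m₂).length = φ.length + m₁ + m₂ := by
  simp [reduction, add_assoc]

theorem numViol_map_liftClause {β : Assignment (V ⊕ Fin 3)} (hy : β (Sum.inr 0) = false)
    (φ : CNF V) : numViol (φ.map liftClause) β = numViol φ (β ∘ Sum.inl) := by
  simp only [numViol, ← List.countP_eq_length_filter, List.countP_map]
  congr 1
  funext C
  simp [liftClause, satClause, hy, Function.comp_def]

theorem min_le_numViol_reduction {φ : CNF V} {k : ℝ} (hφ : ∀ α, k ≤ numViol φ α) (m₁ m₂ : ℕ)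
    {β : Assignment (V ⊕ Fin 3)} (hz : β (Sum.inr 1) ≠ β (Sum.inr 2)) :
    min k (min (m₁ : ℝ) m₂) ≤ numViol (reduction φ m₁ m₂) β := by
  cases hy : β (Sum.inr 0)
  case false =>
    have hle : numViol φ (β ∘ Sum.inl) ≤ numViol (reduction φ m₁ m₂) β := by
      simp only [reduction, numViol_append, numViol_map_liftClause hy]
      omega
    calc min k (min (m₁ : ℝ) m₂) ≤ k := min_le_left _ _
      _ ≤ numViol φ (β ∘ Sum.inl) := hφ _
      _ ≤ numViol (reduction φ m₁ m₂) β := by exact_mod_cast hle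
  case true =>
    obtain ⟨hz₁, hz₂⟩ | ⟨hz₁, hz₂⟩ :
        (β (Sum.inr 1) = false ∧ β (Sum.inr 2) = true) ∨
          (β (Sum.inr 1) = true ∧ β (Sum.inr 2) = false) := by
      revert hz; cases β (Sum.inr 1) <;> cases β (Sum.inr 2) <;> simp
    · have hle : m₁ ≤ numViol (reduction φ m₁ m₂) β := by
        rw [reduction, numViol_append, numViol_append,
          numViol_replicate_of_satClause_eq_false (by simp [satClause, hy, hz₁, hz₂])]
        omega
      calc min k (min (m₁ : ℝ) m₂) ≤ m₁ := (min_le_right _ _).trans (min_le_left _ _)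
        _ ≤ numViol (reduction φ m₁ m₂) β := by exact_mod_cast hle
    · have hle : m₂ ≤ numViol (reduction φ m₁ m₂) β := by
        rw [reduction, numViol_append,
          numViol_replicate_of_satClause_eq_false (by simp [satClause, hy, hz₁, hz₂])]
        omega
      calc min k (min (m₁ : ℝ) m₂) ≤ m₂ := (min_le_right _ _).trans (min_le_right _ _)
        _ ≤ numViol (reduction φ m₁ m₂) β := by exact_mod_cast hle

end Reduction

theorem stmt14_general {n : ℕ} (φ : CNF (Fin n))
    (m₁ m₂ : ℕ) (hm₁ : 1 ≤ m₁)
    (ψ : CNF (Fin n ⊕ Fin 3))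
    (hψ : ψ = (φ.map fun C => C.map (fun l => (Sum.inl l.1, l.2)) ++ [(Sum.inr 0, true)])
        ++ List.replicate m₁ [(Sum.inr 0, false), (Sum.inr 1, true), (Sum.inr 2, false)]
        ++ List.replicate m₂ [(Sum.inr 0, false), (Sum.inr 1, false), (Sum.inr 2, true)])
    (αs αe : Assignment (Fin n ⊕ Fin 3))
    (hαs : αs = fun _ => true)
    (hαe : αe = Sum.elim (fun _ => false) fun i => i == 0)
    (δ : ℝ) (hδ : 0 < δ)
    (hviol : ∀ α : Assignment (Fin n), δ * (φ.length : ℝ) ≤ (numViol φ α : ℝ)) :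
    (∀ seq, IsReconfSeq αs αe seq →
        ∃ β ∈ seq,
          min (δ * (φ.length : ℝ)) (min (m₁ : ℝ) (m₂ : ℝ)) ≤ (numViol ψ β : ℝ)) ∧
      ((m₁ : ℝ) = δ * (φ.length : ℝ) → (m₂ : ℝ) = δ * (φ.length : ℝ) →
        optVal ψ αs αe ≤ 1 - δ / (1 + 2 * δ)) := by
  obtain rfl : ψ = reduction φ m₁ m₂ := hψ
  subst hαs hαe
  have hviolating : ∀ seq, IsReconfSeq (fun _ => true) (Sum.elim (fun _ => false) (· == 0)) seq →
      ∃ β ∈ seq, min (δ * φ.length) (min (m₁ : ℝ) m₂) ≤ numViol (reduction φ m₁ m₂) β :=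
    fun seq hseq =>
      (hseq.exists_mem_apply_ne (v := Sum.inr 1) (w := Sum.inr 2) (by simp) (by simp)).imp
        fun _ ⟨hβ, hz⟩ => ⟨hβ, min_le_numViol_reduction hviol m₁ m₂ hz⟩
  refine ⟨hviolating, fun h₁ h₂ => ?_⟩
  have hm : (0 : ℝ) < φ.length := by
    have : (1 : ℝ) ≤ m₁ := by exact_mod_cast hm₁
    nlinarith
  have hbound : 1 - δ * φ.length / (reduction φ m₁ m₂).length = 1 - δ / (1 + 2 * δ) := by
    rw [length_reduction]
    push_cast
    rw [h₁, h₂]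
    field_simp
    ring
  refine optVal_le ?_ fun seq hseq => ?_
  · rw [sub_nonneg, div_le_one (by positivity)]
    linarith
  · obtain ⟨β, hβ, hk⟩ := hviolating seq hseq
    rw [h₁, h₂, min_self, min_self] at hk
    exact ⟨β, hβ, hbound ▸ val_le_one_sub_div hk⟩

/-- Soundness of the reduction to `{3,4}`-SAT Reconfiguration: with `ψ`,
`αs`, `αe` as in the reduction, if `δ > 0` is such that every assignment for `φ` violates at
least `δ·m` clauses of `φ`, then every reconfiguration sequence from `αs` to `αe` contains
an assignment violating at least `min {δ·m, m₁, m₂}` clauses of `ψ`; in particular, if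
`m₁ = m₂ = δ·m` (so `δ·m` is an integer) then `opt_ψ(αs ↔ αe) ≤ 1 - δ/(1 + 2δ)`. -/
theorem stmt14 {n : ℕ} (φ : CNF (Fin n)) (h3 : ∀ C ∈ φ, C.length = 3)
    (m₁ m₂ : ℕ) (hm₁ : 1 ≤ m₁) (hm₂ : 1 ≤ m₂)
    (ψ : CNF (Fin n ⊕ Fin 3))
    (hψ : ψ = (φ.map fun C => C.map (fun l => (Sum.inl l.1, l.2)) ++ [(Sum.inr 0, true)])
        ++ List.replicate m₁ [(Sum.inr 0, false), (Sum.inr 1, true), (Sum.inr 2, false)]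
        ++ List.replicate m₂ [(Sum.inr 0, false), (Sum.inr 1, false), (Sum.inr 2, true)])
    (αs αe : Assignment (Fin n ⊕ Fin 3))
    (hαs : αs = fun _ => true)
    (hαe : αe = Sum.elim (fun _ => false) fun i => i == 0)
    (δ : ℝ) (hδ : 0 < δ)
    (hviol : ∀ α : Assignment (Fin n), δ * (φ.length : ℝ) ≤ (numViol φ α : ℝ)) :
    (∀ seq, IsReconfSeq αs αe seq →
        ∃ β ∈ seq,
          min (δ * (φ.length : ℝ)) (min (m₁ : ℝ) (m₂ : ℝ)) ≤ (numViol ψ β : ℝ)) ∧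
      ((m₁ : ℝ) = δ * (φ.length : ℝ) → (m₂ : ℝ) = δ * (φ.length : ℝ) →
        optVal ψ αs αe ≤ 1 - δ / (1 + 2 * δ)) :=
  stmt14_general φ m₁ m₂ hm₁ ψ hψ αs αe hαs hαe δ hδ hviol
end

section
/- Let φ be an E3-CNF formula with m clauses C_1, …, C_m over variables x_1, …, x_n, let y, z_1, z_2, z_3 be fresh variables, and let m_1, m_2, m_3 ≥ 1 be integers. Let ψ be the E4-CNF formula consisting of the clauses C_j ∨ y for every j ∈ [m], together with m_1 copies of ¬y ∨ z_1 ∨ ¬z_2 ∨ ¬z_3, m_2 copies of ¬y ∨ ¬z_1 ∨ z_2 ∨ ¬z_3, and m_3 copies of ¬y ∨ ¬z_1 ∨ ¬z_2 ∨ z_3. Let α_start assign 1 to all of x_1,…,x_n and (y,z_1,z_2,z_3) = (1,1,1,1), and let α_end assign 0 to all of x_1,…,x_n and (y,z_1,z_2,z_3) = (1,0,0,0). Then α_start and α_end satisfy ψ, and if φ is satisfiable then opt_ψ(α_start ↔ α_end) = 1. -/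
/-!
Walk from `αs` to `αe` through four waypoints, flipping one variable at a time towards the next
waypoint, so that every assignment on the way lies coordinatewise between two consecutive waypoints.
With `y = 1` every clause `Cⱼ ∨ y` holds, and the three gadget clauses hold as long as
`z₁ = z₂ = z₃`; with `y = 0` the gadget clauses hold, and `Cⱼ ∨ y` holds once `x` satisfies `φ`.
So, for a satisfying assignment `α` of `φ`: move `x` to `α` with `(y, z) = (1, 1, 1, 1)`, switch `y`
off, move `z` to `(0, 0, 0)`, switch `y` back on, and move `x` to `0` with `(y, z) = (1, 0, 0, 0)`.
Every assignment on this walk satisfies `ψ`, so the walk has value `1`.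
-/

section Reconfiguration

variable {V : Type}

lemma adjacent_update [DecidableEq V] (α : Assignment V) (v : V) (b : Bool) :
    Adjacent α (Function.update α v b) := by
  have hmem : ∀ u, α u ≠ Function.update α v b u → u = v := fun u hu =>
    not_imp_comm.mp (fun h => (Function.update_of_ne h b α).symm) hu
  exact fun u w hu hw => (hmem u hu).trans (hmem w hw).symm

def ReachableWithin (P : Assignment V → Prop) (s e : Assignment V) : Prop :=
  ∃ seq, IsReconfSeq s e seq ∧ ∀ β ∈ seq, P β

lemma IsReconfSeq.append {s t e : Assignment V} {seq₁ seq₂ : List (Assignment V)}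
    (h₁ : IsReconfSeq s t seq₁) (h₂ : IsReconfSeq t e seq₂) :
    IsReconfSeq s e (seq₁ ++ seq₂) := by
  obtain ⟨hne₁, hhead₁, hlast₁, hchain₁⟩ := h₁
  obtain ⟨hne₂, hhead₂, hlast₂, hchain₂⟩ := h₂
  refine ⟨by simp [hne₁], by rwa [List.head?_append_of_ne_nil _ hne₁],
    by rwa [List.getLast?_append_of_ne_nil _ hne₂], List.isChain_append.mpr ⟨hchain₁, hchain₂, ?_⟩⟩
  rintro x hx y hy
  rw [hlast₁, Option.mem_some_iff] at hx
  rw [hhead₂, Option.mem_some_iff] at hy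
  subst hx hy
  exact fun v w hv => absurd rfl hv

lemma ReachableWithin.trans {P : Assignment V → Prop} {s t e : Assignment V}
    (h₁ : ReachableWithin P s t) (h₂ : ReachableWithin P t e) : ReachableWithin P s e := by
  obtain ⟨seq₁, hseq₁, hP₁⟩ := h₁
  obtain ⟨seq₂, hseq₂, hP₂⟩ := h₂
  refine ⟨seq₁ ++ seq₂, hseq₁.append hseq₂, fun β hβ => ?_⟩
  rcases List.mem_append.mp hβ with hβ | hβ
  exacts [hP₁ β hβ, hP₂ β hβ]

-- Flip the variables of `D` one at a time; this never leaves the box spanned by `s` and `e`.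
lemma reachableWithin_of_forall_between_of_eq_outside [DecidableEq V] {P : Assignment V → Prop}
    (D : Finset V) {s e : Assignment V} (hD : ∀ v ∉ D, s v = e v)
    (hP : ∀ β : Assignment V, (∀ v, β v = s v ∨ β v = e v) → P β) :
    ReachableWithin P s e := by
  induction D using Finset.induction_on generalizing s with
  | empty =>
    obtain rfl : s = e := funext fun v => hD v (Finset.notMem_empty v)
    exact ⟨[s], ⟨List.cons_ne_nil _ _, rfl, rfl, List.isChain_singleton s⟩,
      fun β hβ => hP β fun v => .inl (by rw [List.mem_singleton.mp hβ])⟩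
  | insert v D _ ih =>
    set s' := Function.update s v (e v)
    have hs' : ∀ w, s' w = s w ∨ s' w = e w := by
      intro w
      rcases eq_or_ne w v with rfl | hwv
      · exact .inr (Function.update_self ..)
      · exact .inl (Function.update_of_ne hwv ..)
    have hstep : ReachableWithin P s s' :=
      ⟨[s, s'], ⟨List.cons_ne_nil _ _, rfl, rfl, List.isChain_pair.mpr (adjacent_update s v _)⟩,
        fun β hβ => by
          rcases List.mem_pair.mp hβ with rfl | rfl
          exacts [hP _ fun w => .inl rfl, hP _ hs']⟩
    refine hstep.trans (ih (fun w hw => ?_) fun β hβ => hP β fun w => ?_)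
    · rcases eq_or_ne w v with rfl | hwv
      · exact Function.update_self ..
      · rw [show s' w = s w from Function.update_of_ne hwv ..]
        exact hD w (by simp [hwv, hw])
    · rcases hβ w with h | h
      · rcases hs' w with h' | h' <;> simp only [h, h', true_or, or_true]
      · exact .inr h

lemma reachableWithin_of_forall_between [Fintype V] [DecidableEq V] {P : Assignment V → Prop}
    {s e : Assignment V} (hP : ∀ β : Assignment V, (∀ v, β v = s v ∨ β v = e v) → P β) :
    ReachableWithin P s e :=
  reachableWithin_of_forall_between_of_eq_outside Finset.univ
    (fun v hv => (hv (Finset.mem_univ v)).elim) hP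

lemma val_le_one (φ : CNF V) (α : Assignment V) : val φ α ≤ 1 :=
  div_le_one_of_le₀ (by exact_mod_cast List.length_filter_le _ _) (Nat.cast_nonneg _)

lemma val_eq_one_of_satCNF {φ : CNF V} {α : Assignment V} (hφ : φ ≠ []) (h : satCNF α φ = true) :
    val φ α = 1 := by
  rw [satCNF, List.all_eq_true] at h
  rw [val, List.filter_eq_self.mpr h]
  exact div_self (by exact_mod_cast List.length_pos_iff.mpr hφ |>.ne')

lemma seqVal_le_one (φ : CNF V) {seq : List (Assignment V)} (hseq : seq ≠ []) :
    seqVal φ seq ≤ 1 := by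
  obtain ⟨α, hα⟩ := List.exists_mem_of_ne_nil seq hseq
  have hbdd : BddBelow (val φ '' {α | α ∈ seq}) := by
    refine ⟨0, ?_⟩
    rintro _ ⟨β, -, rfl⟩
    unfold val
    positivity
  exact (csInf_le hbdd ⟨α, hα, rfl⟩).trans (val_le_one φ α)

lemma optVal_eq_one_of_reachableWithin {φ : CNF V} {s e : Assignment V} (hφ : φ ≠ [])
    (h : ReachableWithin (fun β => satCNF β φ = true) s e) : optVal φ s e = 1 := by
  obtain ⟨seq, hseq, hsat⟩ := h
  have hvals : val φ '' {α | α ∈ seq} = {1} := by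
    refine Set.eq_singleton_iff_unique_mem.mpr ⟨?_, ?_⟩
    · obtain ⟨α, hα⟩ := List.exists_mem_of_ne_nil seq hseq.1
      exact ⟨α, hα, val_eq_one_of_satCNF hφ (hsat α hα)⟩
    · rintro _ ⟨α, hα, rfl⟩
      exact val_eq_one_of_satCNF hφ (hsat α hα)
  have hbdd : ∀ x ∈ seqVal φ '' {seq | IsReconfSeq s e seq}, x ≤ 1 := by
    rintro _ ⟨seq', hseq', rfl⟩
    exact seqVal_le_one φ hseq'.1
  refine le_antisymm (Real.sSup_le hbdd zero_le_one) (le_csSup ⟨1, hbdd⟩ ⟨seq, hseq, ?_⟩)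
  rw [seqVal, hvals, csInf_singleton]

end Reconfiguration

section Reduction

variable {V : Type}

def reductionCNF (φ : CNF V) (m₁ m₂ m₃ : ℕ) : CNF (V ⊕ Fin 4) :=
  (φ.map fun C => C.map (fun l => (Sum.inl l.1, l.2)) ++ [(Sum.inr 0, true)])
    ++ List.replicate m₁
        [(Sum.inr 0, false), (Sum.inr 1, true), (Sum.inr 2, false), (Sum.inr 3, false)]
    ++ List.replicate m₂
        [(Sum.inr 0, false), (Sum.inr 1, false), (Sum.inr 2, true), (Sum.inr 3, false)]
    ++ List.replicate m₃
        [(Sum.inr 0, false), (Sum.inr 1, false), (Sum.inr 2, false), (Sum.inr 3, true)]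

variable (φ : CNF V) (m₁ m₂ m₃ : ℕ)

lemma reductionCNF_ne_nil (hm₁ : 1 ≤ m₁) : reductionCNF φ m₁ m₂ m₃ ≠ [] := by
  apply List.ne_nil_of_length_pos
  simp only [reductionCNF, List.length_append, List.length_replicate]
  omega

lemma satCNF_reductionCNF_of_y_true {β : Assignment (V ⊕ Fin 4)} (hy : β (Sum.inr 0) = true)
    (b : Bool) (hz : ∀ j ≠ 0, β (Sum.inr j) = b) : satCNF β (reductionCNF φ m₁ m₂ m₃) = true := by
  have h₁ := hz 1 (by decide)
  have h₂ := hz 2 (by decide)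
  have h₃ := hz 3 (by decide)
  simp only [satCNF, reductionCNF, List.all_append, List.all_map, List.all_replicate,
    Function.comp_def, satClause, List.any_append]
  cases b <;> simp [hy, h₁, h₂, h₃]

lemma satCNF_reductionCNF_of_y_false {β : Assignment (V ⊕ Fin 4)} (hy : β (Sum.inr 0) = false)
    (hx : satCNF (fun v => β (Sum.inl v)) φ = true) :
    satCNF β (reductionCNF φ m₁ m₂ m₃) = true := by
  simp_all [satCNF, reductionCNF, satClause, List.any_append]

lemma reachableWithin_reductionCNF_of_inr_fixed [Fintype V] [DecidableEq V]
    (x x' : Assignment V) {γ : Fin 4 → Bool} (hγ₀ : γ 0 = true) {b : Bool} (hγ : ∀ j ≠ 0, γ j = b) :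
    ReachableWithin (fun β => satCNF β (reductionCNF φ m₁ m₂ m₃) = true)
      (Sum.elim x γ) (Sum.elim x' γ) := by
  refine reachableWithin_of_forall_between fun β hβ => ?_
  refine satCNF_reductionCNF_of_y_true φ m₁ m₂ m₃ (b := b) ?_ fun j hj => ?_
  · simpa [hγ₀] using hβ (Sum.inr 0)
  · simpa [hγ j hj] using hβ (Sum.inr j)

lemma reachableWithin_reductionCNF_of_inl_fixed [Fintype V] [DecidableEq V] {α : Assignment V}
    (hα : satCNF α φ = true) {γ γ' : Fin 4 → Bool}
    (hγ : (γ 0 = false ∧ γ' 0 = false) ∨ ∃ b, ∀ j ≠ 0, γ j = b ∧ γ' j = b) :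
    ReachableWithin (fun β => satCNF β (reductionCNF φ m₁ m₂ m₃) = true)
      (Sum.elim α γ) (Sum.elim α γ') := by
  refine reachableWithin_of_forall_between fun β hβ => ?_
  have hx : (fun v => β (Sum.inl v)) = α := funext fun v => by simpa using hβ (Sum.inl v)
  cases hy : β (Sum.inr 0)
  · exact satCNF_reductionCNF_of_y_false φ m₁ m₂ m₃ hy (hx ▸ hα)
  · obtain ⟨hγ₀, hγ'₀⟩ | ⟨b, hb⟩ := hγ
    · rcases hβ (Sum.inr 0) with h | h <;> simp_all
    · refine satCNF_reductionCNF_of_y_true φ m₁ m₂ m₃ hy b fun j hj => ?_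
      rcases hβ (Sum.inr j) with h | h <;> simp [h, hb j hj]

end Reduction

theorem stmt15_general {n : ℕ} (φ : CNF (Fin n))
    (m₁ m₂ m₃ : ℕ) (hm₁ : 1 ≤ m₁)
    (ψ : CNF (Fin n ⊕ Fin 4))
    (hψ : ψ = (φ.map fun C => C.map (fun l => (Sum.inl l.1, l.2)) ++ [(Sum.inr 0, true)])
        ++ List.replicate m₁
            [(Sum.inr 0, false), (Sum.inr 1, true), (Sum.inr 2, false), (Sum.inr 3, false)]
        ++ List.replicate m₂
            [(Sum.inr 0, false), (Sum.inr 1, false), (Sum.inr 2, true), (Sum.inr 3, false)]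
        ++ List.replicate m₃
            [(Sum.inr 0, false), (Sum.inr 1, false), (Sum.inr 2, false), (Sum.inr 3, true)])
    (αs αe : Assignment (Fin n ⊕ Fin 4))
    (hαs : αs = fun _ => true)
    (hαe : αe = Sum.elim (fun _ => false) fun i => i == 0) :
    satCNF αs ψ ∧ satCNF αe ψ ∧ ((∃ α, satCNF α φ) → optVal ψ αs αe = 1) := by
  replace hψ : ψ = reductionCNF φ m₁ m₂ m₃ := hψ
  rw [← Sum.elim_lam_const_lam_const true] at hαs
  subst hψ hαs hαe
  refine ⟨satCNF_reductionCNF_of_y_true φ m₁ m₂ m₃ rfl true fun _ _ => rfl,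
    satCNF_reductionCNF_of_y_true φ m₁ m₂ m₃ rfl false fun j hj => by simp [hj], ?_⟩
  rintro ⟨α, hα⟩
  apply optVal_eq_one_of_reachableWithin (reductionCNF_ne_nil φ m₁ m₂ m₃ hm₁)
  have hx₁ := reachableWithin_reductionCNF_of_inr_fixed φ m₁ m₂ m₃ (fun _ => true) α
    (γ := fun _ => true) rfl fun _ _ => rfl
  have hy₀ := reachableWithin_reductionCNF_of_inl_fixed φ m₁ m₂ m₃ hα
    (γ := fun _ => true) (γ' := fun j => !(j == 0)) (.inr ⟨true, by decide⟩)
  have hz₀ := reachableWithin_reductionCNF_of_inl_fixed φ m₁ m₂ m₃ hα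
    (γ := fun j => !(j == 0)) (γ' := fun _ => false) (.inl ⟨rfl, rfl⟩)
  have hy₁ := reachableWithin_reductionCNF_of_inl_fixed φ m₁ m₂ m₃ hα
    (γ := fun _ => false) (γ' := fun j => j == 0) (.inr ⟨false, by decide⟩)
  have hx₀ := reachableWithin_reductionCNF_of_inr_fixed φ m₁ m₂ m₃ α (fun _ => false)
    (γ := fun j => j == 0) rfl (b := false) (by decide)
  exact hx₁.trans <| hy₀.trans <| hz₀.trans <| hy₁.trans hx₀

/-- Completeness of the reduction to E4-SAT Reconfiguration: with fresh
variables `y = inr 0`, `z₁ = inr 1`, `z₂ = inr 2`, `z₃ = inr 3`, the E4-CNF formula `ψ`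
consists of the clauses `C_j ∨ y` (for `j ∈ [m]`), `m₁ ≥ 1` copies of `¬y ∨ z₁ ∨ ¬z₂ ∨ ¬z₃`,
`m₂ ≥ 1` copies of `¬y ∨ ¬z₁ ∨ z₂ ∨ ¬z₃`, and `m₃ ≥ 1` copies of `¬y ∨ ¬z₁ ∨ ¬z₂ ∨ z₃`;
`αs` assigns `1` to every variable (so `(y,z₁,z₂,z₃) = (1,1,1,1)`), and `αe` assigns `0` to
every `xᵢ` and `(y,z₁,z₂,z₃) = (1,0,0,0)`. Then `αs` and `αe` satisfy `ψ`, and if `φ` is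
satisfiable then `opt_ψ(αs ↔ αe) = 1`. -/
theorem stmt15 {n : ℕ} (φ : CNF (Fin n)) (h3 : ∀ C ∈ φ, C.length = 3)
    (m₁ m₂ m₃ : ℕ) (hm₁ : 1 ≤ m₁) (hm₂ : 1 ≤ m₂) (hm₃ : 1 ≤ m₃)
    (ψ : CNF (Fin n ⊕ Fin 4))
    (hψ : ψ = (φ.map fun C => C.map (fun l => (Sum.inl l.1, l.2)) ++ [(Sum.inr 0, true)])
        ++ List.replicate m₁
            [(Sum.inr 0, false), (Sum.inr 1, true), (Sum.inr 2, false), (Sum.inr 3, false)]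
        ++ List.replicate m₂
            [(Sum.inr 0, false), (Sum.inr 1, false), (Sum.inr 2, true), (Sum.inr 3, false)]
        ++ List.replicate m₃
            [(Sum.inr 0, false), (Sum.inr 1, false), (Sum.inr 2, false), (Sum.inr 3, true)])
    (αs αe : Assignment (Fin n ⊕ Fin 4))
    (hαs : αs = fun _ => true)
    (hαe : αe = Sum.elim (fun _ => false) fun i => i == 0) :
    satCNF αs ψ ∧ satCNF αe ψ ∧ ((∃ α, satCNF α φ) → optVal ψ αs αe = 1) :=
  stmt15_general φ m₁ m₂ m₃ hm₁ ψ hψ αs αe hαs hαe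
end
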